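/- Let F : ℂ × ℂ × ℂ → ℂ be a function, written F(x,y;α). Say that the three-leg relation holds on a quadrilateral (v0,v1,v2,v3) with parameter pair (α,β) if F(v0,v1;α) = F(v0,v2;α−β)·F(v0,v3;β). Assume: (i) F(x,y;α)·F(x,y;−α) = 1 for all x,y,α ∈ ℂ; (ii) for all v0,v1,v2,v3,α,β ∈ ℂ, the three-leg relation holds on (v0,v1,v2,v3) with (α,β) if and only if it holds on (v1,v2,v3,v0) with (β,α). Then for all x0,x1,x2,x3,x12,x31,x123 ∈ ℂ and all α1,α2,α3 ∈ ℂ: if the three-leg relation holds on (x0,x1,x12,x2) with (α1,α2), on (x0,x3,x31,x1) with (α3,α1), and on (x1,x12,x123,x31) with (α2,α3), then F(x1,x2;α2−α1) = F(x1,x123;α2−α3)·F(x1,x3;α3−α1). -/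

import Mathlib

/-!
Rotating the three-leg relations of the faces `(x0,x1,x12,x2)` and `(x0,x3,x31,x1)` re-centres
them at `x1`. Together with the face relation centred at `x1`, the legs to `x0` and `x31` then
cancel, because every leg `F x y α` is invertible with inverse `F x y (-α)`.
-/

def ThreeLeg {V A K : Type*} [Sub A] [Mul K] (F : V → V → A → K) (v0 v1 v2 v3 : V) (α β : A) :
    Prop :=
  F v0 v1 α = F v0 v2 (α - β) * F v0 v3 β

namespace ThreeLeg

variable {V A K : Type*} [AddGroup A] [CommGroupWithZero K] {F : V → V → A → K}

/-- Three-leg relations centred at the same vertex `x` compose along the shared legs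
`x → c` and `x → e`. -/
theorem comp {x a b c d e f : V} {α β γ : A} (hsym : ∀ y α, F x y α * F x y (-α) = 1)
    (hab : ThreeLeg F x a b c α β) (hcd : ThreeLeg F x c d e β γ)
    (haf : ThreeLeg F x a f e α γ) :
    ThreeLeg F x b f d (α - β) (γ - β) := by
  have he : F x e γ ≠ 0 := left_ne_zero_of_mul_eq_one (hsym e γ)
  have hd : F x d (β - γ) ≠ 0 := left_ne_zero_of_mul_eq_one (hsym d (β - γ))
  have hd_inv : F x d (γ - β) = (F x d (β - γ))⁻¹ := by
    rw [← neg_sub]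
    exact eq_inv_of_mul_eq_one_right (hsym d (β - γ))
  have hchain : F x b (α - β) * F x d (β - γ) * F x e γ = F x f (α - γ) * F x e γ := by
    rw [mul_assoc, ← hcd, ← hab, haf]
  rw [ThreeLeg, sub_sub_sub_cancel_right, hd_inv, eq_mul_inv_iff_mul_eq₀ hd]
  exact mul_right_cancel₀ he hchain

end ThreeLeg

/-- The tetrahedron property: for a quad-graph equation with multiplicative
three-leg form, the three-leg relations on three faces of the cube imply the
relation among the fields at the vertices `x1, x2, x3, x123` of the dashed
tetrahedron. -/
theorem threeLeg_tetrahedron_property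
    (F : ℂ → ℂ → ℂ → ℂ)
    (hsym : ∀ x y α : ℂ, F x y α * F x y (-α) = 1)
    (hcenter : ∀ v0 v1 v2 v3 α β : ℂ,
      (F v0 v1 α = F v0 v2 (α - β) * F v0 v3 β) ↔
      (F v1 v2 β = F v1 v3 (β - α) * F v1 v0 α))
    (x0 x1 x2 x3 x12 x31 x123 α1 α2 α3 : ℂ)
    (h12 : F x0 x1 α1 = F x0 x12 (α1 - α2) * F x0 x2 α2)
    (h31 : F x0 x3 α3 = F x0 x31 (α3 - α1) * F x0 x1 α1)
    (h123 : F x1 x12 α2 = F x1 x123 (α2 - α3) * F x1 x31 α3) :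
    F x1 x2 (α2 - α1) = F x1 x123 (α2 - α3) * F x1 x3 (α3 - α1) := by
  have h12' : ThreeLeg F x1 x12 x2 x0 α2 α1 := (hcenter x0 x1 x12 x2 α1 α2).mp h12
  have h31' : ThreeLeg F x1 x0 x3 x31 α1 α3 := (hcenter x1 x0 x3 x31 α1 α3).mpr h31
  have h := ThreeLeg.comp (hsym x1) h12' h31' h123
  rwa [ThreeLeg, sub_sub_sub_cancel_right] at h
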